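/- arXiv:0710.1346 — 3 statements merged into one kernel-verified Lean document; each statement's English description precedes it below -/
import Mathlib

section
/- Let N⁰ be a probability measure on ℝ with Stieltjes transform f⁰, σ a probability measure on ℝ with ∫|τ| σ(dτ) < ∞, and c ≥ 0. Suppose N is a non-negative finite measure on ℝ whose Stieltjes transform f satisfies f(z) = f⁰(z − c ∫ τ σ(dτ)/(1 + τ f(z))) for all Im z ≠ 0, where Im f(z)·Im z ≥ 0. Then N(ℝ) = 1, i.e., N is a probability measure. -/
/-!
For a finite measure `μ` and `w y / y → i`, dominated convergence gives
`y f_μ(w y) → i μ(ℝ)`. Take `z = iy`. Because `|τ / (1 + τ f)| ≤ 1 / Im f` and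
`y Im f(iy) → N(ℝ)`, the correction `c ∫ τ σ(dτ) / (1 + τ f(iy))` is `o(y)` when `N ≠ 0`
(and constant when `N = 0`), so the argument `w y` of `f⁰` satisfies `w y / y → i` as well.
Then `y f(iy)` tends both to `i N(ℝ)` and to `i N⁰(ℝ) = i`.
-/

open MeasureTheory

/-- The Stieltjes transform `f_μ(z) = ∫ μ(dλ)/(λ − z)` of a measure on `ℝ`. -/
noncomputable def stieltjesT (μ : Measure ℝ) (z : ℂ) : ℂ :=
  ∫ t, 1 / ((t : ℂ) - z) ∂μ

open Filter Topology Complex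

theorem norm_one_div_ofReal_sub_le (t : ℝ) {z : ℂ} (hz : z.im ≠ 0) :
    ‖1 / ((t : ℂ) - z)‖ ≤ 1 / |z.im| := by
  rw [norm_div, norm_one]
  gcongr
  simpa using abs_im_le_norm ((t : ℂ) - z)

theorem tendsto_ofReal_inv_atTop : Tendsto (fun y : ℝ => (y : ℂ)⁻¹) atTop (𝓝 0) := by
  simpa using tendsto_inv_atTop_zero.ofReal

theorem ofReal_mul_stieltjesT (μ : Measure ℝ) (y : ℝ) (z : ℂ) :
    (y : ℂ) * stieltjesT μ z = ∫ t, 1 / (((t / y : ℝ) : ℂ) - z / y) ∂μ := by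
  rw [stieltjesT, ← integral_const_mul]
  congr 1 with t
  rw [ofReal_div, ← sub_div, one_div_div, mul_one_div]

theorem tendsto_ofReal_mul_stieltjesT_atTop (μ : Measure ℝ) [IsFiniteMeasure μ] {w : ℝ → ℂ}
    (hw : Tendsto (fun y => w y / y) atTop (𝓝 I)) :
    Tendsto (fun y : ℝ => y * stieltjesT μ (w y)) atTop (𝓝 (μ.real Set.univ * I)) := by
  have him : ∀ᶠ y in atTop, 1 / 2 ≤ (w y / y).im :=
    (continuous_im.tendsto I).comp hw |>.eventually (eventually_ge_nhds (by norm_num))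
  have hlim := tendsto_integral_filter_of_dominated_convergence (μ := μ)
    (F := fun y t => 1 / (((t / y : ℝ) : ℂ) - w y / y)) (f := fun _ => I) (fun _ => 2)
    (Eventually.of_forall fun y => (by fun_prop : Measurable _).aestronglyMeasurable)
    (him.mono fun y hy => Eventually.of_forall fun t => by
      have hpos : (0 : ℝ) < (w y / y).im := by linarith
      calc _ ≤ 1 / |(w y / y).im| := norm_one_div_ofReal_sub_le _ hpos.ne'
        _ ≤ 2 := by rw [abs_of_pos hpos, div_le_iff₀ hpos]; linarith)
    (integrable_const 2)
    (Eventually.of_forall fun t => by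
      have ht : Tendsto (fun y : ℝ => ((t / y : ℝ) : ℂ)) atTop (𝓝 0) := by
        simpa using (tendsto_const_nhds.div_atTop tendsto_id).ofReal
      simpa using (ht.sub hw).inv₀ (by simp))
  rw [integral_const, real_smul] at hlim
  simpa only [ofReal_mul_stieltjesT] using hlim

theorem norm_ofReal_div_one_add_mul_le (τ : ℝ) {F : ℂ} (hF : 0 < F.im) :
    ‖(τ : ℂ) / (1 + τ * F)‖ ≤ 1 / F.im := by
  rcases eq_or_ne τ 0 with rfl | hτ
  · simpa using hF.le
  have hden : |τ| * F.im ≤ ‖1 + τ * F‖ := by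
    simpa [abs_mul, abs_of_pos hF] using abs_im_le_norm (1 + τ * F)
  have hτF : 0 < |τ| * F.im := by positivity
  rw [norm_div, norm_real, Real.norm_eq_abs, div_le_div_iff₀ (hτF.trans_le hden) hF]
  linarith

theorem tendsto_integral_ofReal_div_one_add_mul_div_atTop (σ : Measure ℝ) [IsFiniteMeasure σ]
    {F : ℝ → ℂ} {L : ℂ} (hL : 0 < L.im) (hF : Tendsto (fun y : ℝ => y * F y) atTop (𝓝 L)) :
    Tendsto (fun y => (∫ τ, (τ : ℂ) / (1 + τ * F y) ∂σ) / y) atTop (𝓝 0) := by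
  have hF0 : Tendsto F atTop (𝓝 0) := by
    refine (mul_zero L ▸ hF.mul tendsto_ofReal_inv_atTop).congr' ?_
    filter_upwards [eventually_ne_atTop 0] with y hy
    rw [mul_comm, inv_mul_cancel_left₀ (ofReal_ne_zero.mpr hy)]
  have him : ∀ᶠ y in atTop, L.im / 2 ≤ y * (F y).im := by
    have := (continuous_im.tendsto L).comp hF |>.eventually (eventually_ge_nhds (half_lt_self hL))
    simpa [im_ofReal_mul] using this
  have hbound : ∀ᶠ y in atTop, ∀ τ : ℝ, ‖(τ : ℂ) / (1 + τ * F y) / y‖ ≤ 2 / L.im := by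
    filter_upwards [him, eventually_gt_atTop 0] with y hy hy0 τ
    have hFy : 0 < (F y).im := by
      by_contra!
      nlinarith
    rw [norm_div, norm_real, Real.norm_of_nonneg hy0.le, div_le_iff₀ hy0]
    calc _ ≤ 1 / (F y).im := norm_ofReal_div_one_add_mul_le τ hFy
      _ ≤ 2 / L.im * y := by
        rw [div_mul_eq_mul_div, div_le_div_iff₀ hFy hL]; linarith
  have hlim (τ : ℝ) : Tendsto (fun y => (τ : ℂ) / (1 + τ * F y) / y) atTop (𝓝 0) := by
    simpa [div_eq_mul_inv] using
      (tendsto_const_nhds.div (tendsto_const_nhds.add (tendsto_const_nhds.mul hF0))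
        (by simp)).mul tendsto_ofReal_inv_atTop
  simpa [integral_div] using tendsto_integral_filter_of_dominated_convergence (μ := σ)
    (fun _ => 2 / L.im)
    (Eventually.of_forall fun y => (by fun_prop : Measurable _).aestronglyMeasurable)
    (hbound.mono fun y hy => Eventually.of_forall (hy ·)) (integrable_const _)
    (Eventually.of_forall hlim)

theorem self_consistent_equation_total_mass_one_general
    (N0 σ : Measure ℝ) [IsProbabilityMeasure N0] [IsProbabilityMeasure σ]
    (c : ℝ)
    (N : Measure ℝ) [IsFiniteMeasure N]
    (heq : ∀ z : ℂ, z.im ≠ 0 →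
      stieltjesT N z =
        stieltjesT N0 (z - c * ∫ τ, (τ : ℂ) / (1 + τ * stieltjesT N z) ∂σ)) :
    N Set.univ = 1 := by
  set F : ℝ → ℂ := fun y => stieltjesT N (I * y)
  set S : ℝ → ℂ := fun y => ∫ τ, (τ : ℂ) / (1 + τ * F y) ∂σ
  have hF : Tendsto (fun y : ℝ => y * F y) atTop (𝓝 (N.real Set.univ * I)) := by
    refine tendsto_ofReal_mul_stieltjesT_atTop N (tendsto_const_nhds.congr' ?_)
    filter_upwards [eventually_ne_atTop 0] with y hy
    rw [mul_div_cancel_right₀ _ (ofReal_ne_zero.mpr hy)]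
  have hS : Tendsto (fun y => S y / y) atTop (𝓝 0) := by
    rcases measureReal_nonneg.eq_or_lt with hmass0 | hmass_pos
    · have hN0 : N = 0 := Measure.measure_univ_eq_zero.mp
        ((measureReal_eq_zero_iff (measure_ne_top N _)).mp hmass0.symm)
      simpa [S, F, hN0, stieltjesT, div_eq_mul_inv] using
        tendsto_ofReal_inv_atTop.const_mul (∫ τ, (τ : ℂ) ∂σ)
    · exact tendsto_integral_ofReal_div_one_add_mul_div_atTop σ (by simpa using hmass_pos) hF
  have hw : Tendsto (fun y : ℝ => (I * y - c * S y) / y) atTop (𝓝 I) := by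
    refine (by simpa using tendsto_const_nhds.sub (hS.const_mul (c : ℂ)) :
      Tendsto (fun y => I - c * (S y / y)) atTop (𝓝 I)).congr' ?_
    filter_upwards [eventually_ne_atTop 0] with y hy
    rw [sub_div, mul_div_cancel_right₀ _ (ofReal_ne_zero.mpr hy), mul_div_assoc]
  have hF' : Tendsto (fun y : ℝ => y * F y) atTop (𝓝 (1 * I)) := by
    refine (probReal_univ (μ := N0) ▸ tendsto_ofReal_mul_stieltjesT_atTop N0 hw).congr' ?_
    filter_upwards [eventually_ne_atTop 0] with y hy
    exact congrArg _ (heq (I * y) (by simpa using hy)).symm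
  have hmass : (N.real Set.univ : ℂ) = 1 :=
    mul_right_cancel₀ I_ne_zero (tendsto_nhds_unique hF hF')
  rw [← ENNReal.toReal_eq_one_iff, ← measureReal_def]
  exact_mod_cast hmass

/-- If a finite non-negative measure `N` has Stieltjes transform satisfying the
self-consistent (Marchenko–Pastur) equation
`f(z) = f⁰(z − c ∫ τ σ(dτ)/(1 + τ f(z)))`, where `N⁰, σ` are probability measures and
`∫|τ| σ(dτ) < ∞`, then `N` is a probability measure. -/
theorem self_consistent_equation_total_mass_one
    (N0 σ : Measure ℝ) [IsProbabilityMeasure N0] [IsProbabilityMeasure σ]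
    (hσ : Integrable (fun τ => |τ|) σ) (c : ℝ) (hc : 0 ≤ c)
    (N : Measure ℝ) [IsFiniteMeasure N]
    (hsign : ∀ z : ℂ, z.im ≠ 0 → 0 ≤ (stieltjesT N z).im * z.im)
    (heq : ∀ z : ℂ, z.im ≠ 0 →
      stieltjesT N z =
        stieltjesT N0 (z - c * ∫ τ, (τ : ℂ) / (1 + τ * stieltjesT N z) ∂σ)) :
    N Set.univ = 1 :=
  self_consistent_equation_total_mass_one_general N0 σ c N heq
end

section
/- Let f be the Stieltjes transform of a finite non-negative measure N on ℝ with N ≠ 0, and σ a probability measure on ℝ such that 1 + τ f(z) ≠ 0 for σ-a.e. τ and Im z ≠ 0. Define ζ(z) = −c ∫ τ σ(dτ)/(1 + τ f(z)) for c ≥ 0. Then Im(z + ζ(z)) has the same sign as Im z and |Im(z + ζ(z))| ≥ |Im z| for Im z ≠ 0. -/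
/-!
Pointwise, `Im (1 / (t - z)) = Im z / |t - z|²`, so `Im f(z)` has the sign of `Im z` (weakly).
Then `Im (τ / (1 + τ f)) = -τ² Im f / |1 + τ f|²` has the opposite sign, so the correction
`-c ∫ τ σ(dτ) / (1 + τ f(z))` moves `Im z` further away from `0`. Both sign statements pass
through the integrals because they are pointwise and the imaginary part commutes with integration
(and trivially for a non-integrable integrand, whose integral is `0` in Lean).
-/

open MeasureTheory

lemma im_integral_mul_nonneg {α : Type*} [MeasurableSpace α] {μ : Measure α} {g : α → ℂ}
    {a : ℝ} (h : ∀ x, 0 ≤ (g x).im * a) : 0 ≤ (∫ x, g x ∂μ).im * a := by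
  by_cases hg : Integrable g μ
  · rw [← Complex.imCLM_apply, ← Complex.imCLM.integral_comp_comm hg, ← integral_mul_const]
    exact integral_nonneg h
  · simp [integral_undef hg]

lemma one_div_ofReal_sub_im_mul_im_nonneg (t : ℝ) (z : ℂ) :
    0 ≤ (1 / ((t : ℂ) - z)).im * z.im := by
  have him : (1 / ((t : ℂ) - z)).im = z.im / Complex.normSq ((t : ℂ) - z) := by
    simp [Complex.inv_im]
  rw [him, div_mul_eq_mul_div]
  exact div_nonneg (mul_self_nonneg _) (Complex.normSq_nonneg _)

lemma stieltjesT_im_mul_im_nonneg (N : Measure ℝ) (z : ℂ) :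
    0 ≤ (stieltjesT N z).im * z.im :=
  im_integral_mul_nonneg fun t => one_div_ofReal_sub_im_mul_im_nonneg t z

/-- Also correct when `1 + τ w = 0`, where both sides are `0`. -/
lemma ofReal_div_one_add_ofReal_mul_im (τ : ℝ) (w : ℂ) :
    ((τ : ℂ) / (1 + τ * w)).im = -(τ ^ 2 * w.im) / Complex.normSq (1 + τ * w) := by
  rw [div_eq_mul_inv, Complex.mul_im, Complex.inv_im, Complex.inv_re]
  simp only [Complex.ofReal_re, Complex.ofReal_im, Complex.add_im, Complex.one_im,
    Complex.mul_im, Complex.add_re, Complex.one_re, Complex.mul_re]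
  ring

lemma ofReal_div_one_add_ofReal_mul_im_mul_nonneg {w : ℂ} {a : ℝ} (h : 0 ≤ w.im * a) (τ : ℝ) :
    0 ≤ ((τ : ℂ) / (1 + τ * w)).im * -a := by
  rw [ofReal_div_one_add_ofReal_mul_im, div_mul_eq_mul_div]
  refine div_nonneg ?_ (Complex.normSq_nonneg _)
  nlinarith [mul_nonneg (sq_nonneg τ) h]

lemma abs_le_abs_of_sq_le_mul {a b : ℝ} (h : b ^ 2 ≤ a * b) : |b| ≤ |a| := by
  rw [← sq_le_sq]
  nlinarith [sq_nonneg (a - b)]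

theorem shifted_argument_im_ge_general
    (N : Measure ℝ)
    (σ : Measure ℝ) (c : ℝ) (hc : 0 ≤ c) :
    ∀ z : ℂ, z.im ≠ 0 →
      0 < (z + -(c : ℂ) * ∫ τ, (τ : ℂ) / (1 + τ * stieltjesT N z) ∂σ).im * z.im ∧
      |z.im| ≤ |(z + -(c : ℂ) * ∫ τ, (τ : ℂ) / (1 + τ * stieltjesT N z) ∂σ).im| := by
  intro z hz
  set I := ∫ τ, (τ : ℂ) / (1 + τ * stieltjesT N z) ∂σ
  have hI : 0 ≤ I.im * -z.im := im_integral_mul_nonneg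
    (ofReal_div_one_add_ofReal_mul_im_mul_nonneg (stieltjesT_im_mul_im_nonneg N z))
  have him : (z + -(c : ℂ) * I).im = z.im - c * I.im := by simp [sub_eq_add_neg]
  have hsq : z.im ^ 2 ≤ (z + -(c : ℂ) * I).im * z.im := by
    rw [him]; nlinarith [mul_nonneg hc hI]
  exact ⟨(sq_pos_of_ne_zero hz).trans_le hsq, abs_le_abs_of_sq_le_mul hsq⟩

/-- For `ζ(z) = −c ∫ τ σ(dτ)/(1 + τ f(z))` with `f` the Stieltjes transform of a
nonzero finite non-negative measure, `Im (z + ζ(z))` has the same sign as `Im z` and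
`|Im (z + ζ(z))| ≥ |Im z|`. -/
theorem shifted_argument_im_ge
    (N : Measure ℝ) [IsFiniteMeasure N] (hN : N ≠ 0)
    (σ : Measure ℝ) [IsProbabilityMeasure σ] (c : ℝ) (hc : 0 ≤ c)
    (hden : ∀ z : ℂ, z.im ≠ 0 → ∀ᵐ (τ : ℝ) ∂σ, 1 + (τ : ℂ) * stieltjesT N z ≠ 0) :
    ∀ z : ℂ, z.im ≠ 0 →
      0 < (z + -(c : ℂ) * ∫ τ, (τ : ℂ) / (1 + τ * stieltjesT N z) ∂σ).im * z.im ∧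
      |z.im| ≤ |(z + -(c : ℂ) * ∫ τ, (τ : ℂ) / (1 + τ * stieltjesT N z) ∂σ).im| :=
  shifted_argument_im_ge_general N σ c hc
end

section
/- Let f be the Stieltjes transform of a nonzero finite non-negative measure N on ℝ, and ζ(iy) = −c ∫ τ σ(dτ)/(1 + τ f(iy)) with σ a probability measure and c ≥ 0. Then lim_{y→∞} ζ(iy)/y = 0. -/
/-!
Because `‖t - iy‖ ≥ y`, dominated convergence gives `y f(iy) → i N(ℝ)`. Hence `f(iy) → 0` and
`y Im f(iy) ≥ N(ℝ)/2` for large `y`. Since `‖1 + τ f‖ ≥ |τ| Im f`, the integrand `τ / (1 + τ f(iy))`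
divided by `y` is bounded by `2 / N(ℝ)` uniformly in `τ`, and it tends to `0` pointwise;
dominated convergence over the finite measure `σ` concludes.
-/

open MeasureTheory Filter

open Complex Topology

lemma abs_im_le_norm_ofReal_sub (t : ℝ) (z : ℂ) : |z.im| ≤ ‖(t : ℂ) - z‖ := by
  simpa using abs_im_le_norm ((t : ℂ) - z)

lemma norm_ofReal_div_ofReal_sub_mul_I_le {y : ℝ} (hy : 0 < y) (t : ℝ) :
    ‖(y : ℂ) / (t - y * I)‖ ≤ 1 := by
  have hle : y ≤ ‖(t : ℂ) - y * I‖ := by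
    simpa [abs_of_pos hy] using abs_im_le_norm_ofReal_sub t (y * I)
  rw [norm_div, norm_real, Real.norm_of_nonneg hy.le]
  exact div_le_one_of_le₀ hle (norm_nonneg _)

lemma tendsto_ofReal_inv_atTop_zero : Tendsto (fun y : ℝ => ((y : ℂ))⁻¹) atTop (𝓝 0) := by
  simpa using (tendsto_inv_atTop_zero (𝕜 := ℝ)).ofReal

lemma tendsto_ofReal_div_ofReal_sub_mul_I (t : ℝ) :
    Tendsto (fun y : ℝ => (y : ℂ) / (t - y * I)) atTop (𝓝 I) := by
  have hlim : Tendsto (fun y : ℝ => (t * ((y : ℂ))⁻¹ - I)⁻¹) atTop (𝓝 I) := by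
    simpa using ((tendsto_ofReal_inv_atTop_zero.const_mul (t : ℂ)).sub_const I).inv₀ (by simp)
  refine hlim.congr' ?_
  filter_upwards [eventually_gt_atTop 0] with y hy
  have : (y : ℂ) ≠ 0 := ofReal_ne_zero.mpr hy.ne'
  field_simp

lemma tendsto_mul_stieltjesT_mul_I (N : Measure ℝ) [IsFiniteMeasure N] :
    Tendsto (fun y : ℝ => (y : ℂ) * stieltjesT N (y * I)) atTop (𝓝 (N.real Set.univ * I)) := by
  have hrw : ∀ y : ℝ, (y : ℂ) * stieltjesT N (y * I) = ∫ t, (y : ℂ) / (t - y * I) ∂N := by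
    intro y
    simp only [stieltjesT, ← integral_const_mul, mul_one_div]
  simp only [hrw]
  have hconst : N.real Set.univ * I = ∫ _ : ℝ, I ∂N := by simp
  rw [hconst]
  refine tendsto_integral_filter_of_dominated_convergence (fun _ => 1)
    (.of_forall fun y => (by fun_prop : Measurable _).aestronglyMeasurable) ?_ (integrable_const 1)
    (.of_forall tendsto_ofReal_div_ofReal_sub_mul_I)
  filter_upwards [eventually_gt_atTop 0] with y hy
  exact .of_forall (norm_ofReal_div_ofReal_sub_mul_I_le hy)

lemma norm_ofReal_div_one_add_mul_le_s16 {z : ℂ} (hz : 0 < z.im) (τ : ℝ) :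
    ‖(τ : ℂ) / (1 + τ * z)‖ ≤ 1 / z.im := by
  rcases eq_or_ne τ 0 with rfl | hτ
  · simpa using hz.le
  have hden : |τ| * z.im ≤ ‖1 + τ * z‖ := by
    simpa [abs_mul, abs_of_pos hz] using abs_im_le_norm (1 + τ * z)
  rw [norm_div, norm_real, Real.norm_eq_abs]
  calc |τ| / ‖1 + τ * z‖ ≤ |τ| / (|τ| * z.im) := by gcongr
    _ = 1 / z.im := by field_simp [abs_pos.mpr hτ]

lemma tendsto_integral_div_one_add_mul_div_atTop (σ : Measure ℝ) [IsFiniteMeasure σ]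
    {F : ℝ → ℂ} {w : ℂ} (hw : 0 < w.im)
    (hF : Tendsto (fun y : ℝ => (y : ℂ) * F y) atTop (𝓝 w)) :
    Tendsto (fun y : ℝ => (∫ τ, (τ : ℂ) / (1 + τ * F y) ∂σ) / y) atTop (𝓝 0) := by
  have hF0 : Tendsto F atTop (𝓝 0) := by
    refine (by simpa using tendsto_ofReal_inv_atTop_zero.mul hF :
      Tendsto (fun y : ℝ => ((y : ℂ))⁻¹ * (y * F y)) atTop (𝓝 0)).congr' ?_
    filter_upwards [eventually_ne_atTop 0] with y hy
    rw [inv_mul_cancel_left₀ (ofReal_ne_zero.mpr hy)]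
  have hIm : ∀ᶠ y : ℝ in atTop, 0 < y ∧ w.im / 2 ≤ y * (F y).im := by
    have hlim : Tendsto (fun y : ℝ => y * (F y).im) atTop (𝓝 w.im) := by
      simpa [Function.comp_def] using (continuous_im.tendsto w).comp hF
    exact (eventually_gt_atTop 0).and (hlim.eventually (eventually_ge_nhds (half_lt_self hw)))
  simp only [← integral_div]
  rw [show (0 : ℂ) = ∫ _ : ℝ, (0 : ℂ) ∂σ by simp]
  refine tendsto_integral_filter_of_dominated_convergence (fun _ => 2 / w.im)
    (.of_forall fun y => (by fun_prop : Measurable _).aestronglyMeasurable) ?_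
    (integrable_const _) (.of_forall fun τ => ?_)
  · filter_upwards [hIm] with y ⟨hy, hyF⟩
    have hFy : 0 < (F y).im := (mul_pos_iff_of_pos_left hy).mp (by linarith)
    refine .of_forall fun τ => ?_
    rw [norm_div, norm_real, Real.norm_of_nonneg hy.le]
    calc ‖(τ : ℂ) / (1 + τ * F y)‖ / y ≤ 1 / (F y).im / y := by
          gcongr; exact norm_ofReal_div_one_add_mul_le_s16 hFy τ
      _ = 1 / (y * (F y).im) := by field_simp
      _ ≤ 1 / (w.im / 2) := by gcongr
      _ = 2 / w.im := by ring
  · have hden : Tendsto (fun y : ℝ => 1 + τ * F y) atTop (𝓝 1) := by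
      simpa using (hF0.const_mul (τ : ℂ)).const_add 1
    simpa [div_eq_mul_inv] using
      ((tendsto_const_nhds (x := (τ : ℂ))).div hden one_ne_zero).mul tendsto_ofReal_inv_atTop_zero

theorem shift_term_littleo_general
    (N : Measure ℝ) [IsFiniteMeasure N] (hN : N ≠ 0)
    (σ : Measure ℝ) [IsProbabilityMeasure σ] (c : ℝ) :
    Tendsto (fun y : ℝ =>
        (-(c : ℂ) * ∫ τ, (τ : ℂ) / (1 + τ * stieltjesT N (y * Complex.I)) ∂σ) / (y : ℂ))
      atTop (nhds 0) := by
  have : NeZero N := ⟨hN⟩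
  have hlim := tendsto_integral_div_one_add_mul_div_atTop σ (by simp [measureReal_univ_pos])
    (tendsto_mul_stieltjesT_mul_I N)
  simpa only [mul_div_assoc, mul_zero] using hlim.const_mul (-(c : ℂ))

/-- For `ζ(iy) = −c ∫ τ σ(dτ)/(1 + τ f(iy))` with `f` the Stieltjes transform of a
nonzero finite non-negative measure `N` and `σ` a probability measure,
`ζ(iy)/y → 0` as `y → ∞`. -/
theorem shift_term_littleo
    (N : Measure ℝ) [IsFiniteMeasure N] (hN : N ≠ 0)
    (σ : Measure ℝ) [IsProbabilityMeasure σ] (c : ℝ) (hc : 0 ≤ c) :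
    Tendsto (fun y : ℝ =>
        (-(c : ℂ) * ∫ τ, (τ : ℂ) / (1 + τ * stieltjesT N (y * Complex.I)) ∂σ) / (y : ℂ))
      atTop (nhds 0) :=
  shift_term_littleo_general N hN σ c
end
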